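/- Let S = (z₁,…,z_L) and S' = (z₁,…,z_{L-1}, z'_L) be datasets in ℝ^d × {-1,1} differing in one point, with all feature vectors bounded in norm by R. Let w and w' minimize F_S(v) = λ‖v‖² + (1/L)∑_{z∈S} max(0, 1 - y⟨v, x⟩) and F_{S'} respectively, with λ > 0. Then ‖w - w'‖ ≤ R/(λL). -/

import Mathlib

/-!
The objective `F_S v = λ‖v‖² + R_S v`, with `R_S` the empirical hinge risk, is `2λ`-strongly
convex, so its minimizer satisfies the quadratic growth bound `F_S w + λ‖u - w‖² ≤ F_S u`.
Adding this bound at `u = w'` to the one for `F_{S'}` at `u = w`, the regularizers cancel and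
`2λ‖w - w'‖²` is at most the change of `R_S - R_{S'}` between `w'` and `w`. Only the replaced
example contributes to `R_S - R_{S'}`, and the hinge loss of an example with `‖x‖ ≤ R`, `|y| ≤ 1`
is `R`-Lipschitz in the weight, so that change is at most `2R‖w - w'‖ / L`.
-/

open Set Filter Topology

theorem convexOn_sum {𝕜 E β ι : Type*} [Semiring 𝕜] [PartialOrder 𝕜] [AddCommMonoid E]
    [AddCommMonoid β] [PartialOrder β] [IsOrderedAddMonoid β] [SMul 𝕜 E] [Module 𝕜 β]
    {s : Set E} (hs : Convex 𝕜 s) (t : Finset ι) {f : ι → E → β}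
    (hf : ∀ i ∈ t, ConvexOn 𝕜 s (f i)) : ConvexOn 𝕜 s (fun x ↦ ∑ i ∈ t, f i x) := by
  induction t using Finset.cons_induction with
  | empty => simpa using convexOn_const 0 hs
  | cons a t _ ih =>
    simp_rw [Finset.sum_cons]
    exact (hf a (t.mem_cons_self a)).add (ih fun i hi ↦ hf i (Finset.mem_cons_of_mem hi))

theorem Fintype.sum_sub_sum_eq_of_eq_of_ne {ι α M : Type*} [Fintype ι] [DecidableEq ι]
    [AddCommGroup M] {S S' : ι → α} {j : ι} (h : ∀ i, i ≠ j → S i = S' i) (f : α → M) :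
    ∑ i, f (S i) - ∑ i, f (S' i) = f (S j) - f (S' j) := by
  rw [← Finset.sum_sub_distrib]
  exact Finset.sum_eq_single j (fun i _ hi ↦ by rw [h i hi, sub_self])
    (fun hj ↦ absurd (Finset.mem_univ j) hj)

theorem StrongConvexOn.add_sq_norm_le_of_isMinOn {E : Type*} [NormedAddCommGroup E]
    [NormedSpace ℝ E] {s : Set E} {m : ℝ} {f : E → ℝ} {w u : E} (hf : StrongConvexOn s m f)
    (hmin : IsMinOn f s w) (hw : w ∈ s) (hu : u ∈ s) :
    f w + m / 2 * ‖u - w‖ ^ 2 ≤ f u := by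
  have hgap : ∀ a ∈ Ioo (0 : ℝ) 1, a * (m / 2 * ‖u - w‖ ^ 2) ≤ f u - f w := by
    rintro a ⟨ha0, ha1⟩
    have hconv := hf.2 hw hu ha0.le (sub_pos.2 ha1).le (add_sub_cancel a 1)
    have hmin_le : f w ≤ f (a • w + (1 - a) • u) := hmin (hf.1 hw hu ha0.le (sub_pos.2 ha1).le
      (add_sub_cancel a 1))
    rw [smul_eq_mul, smul_eq_mul, norm_sub_rev] at hconv
    nlinarith
  have hlim : Tendsto (fun a : ℝ ↦ a * (m / 2 * ‖u - w‖ ^ 2)) (𝓝[<] 1)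
      (𝓝 (m / 2 * ‖u - w‖ ^ 2)) :=
    ((continuous_mul_const _).tendsto' 1 _ (one_mul _)).mono_left nhdsWithin_le_nhds
  have hgap_lim := le_of_tendsto hlim (eventually_of_mem (Ioo_mem_nhdsLT zero_lt_one) hgap)
  linarith

theorem ConvexOn.strongConvexOn_mul_sq_norm_add {E : Type*} [NormedAddCommGroup E]
    [InnerProductSpace ℝ E] {s : Set E} {g : E → ℝ} (hg : ConvexOn ℝ s g) (lam : ℝ) :
    StrongConvexOn s (2 * lam) (fun v ↦ lam * ‖v‖ ^ 2 + g v) := by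
  rw [strongConvexOn_iff_convex]
  convert hg using 2
  ring

section Hinge

variable {E : Type*} [NormedAddCommGroup E] [InnerProductSpace ℝ E]

def hingeLoss (v : E) (z : E × ℝ) : ℝ := max 0 (1 - z.2 * inner ℝ v z.1)

noncomputable def empiricalHingeRisk {L : ℕ} (S : Fin L → E × ℝ) (v : E) : ℝ :=
  1 / (L : ℝ) * ∑ i, hingeLoss v (S i)

theorem convexOn_hingeLoss (z : E × ℝ) : ConvexOn ℝ univ (hingeLoss · z) := by
  refine (convexOn_const 0 convex_univ).sup
    ⟨convex_univ, fun u _ v _ a b _ _ hab ↦ le_of_eq ?_⟩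
  simp only [smul_eq_mul, inner_add_left, real_inner_smul_left]
  linear_combination -hab

theorem hingeLoss_sub_le (u v : E) (z : E × ℝ) :
    hingeLoss u z - hingeLoss v z ≤ |z.2| * ‖z.1‖ * ‖u - v‖ := by
  refine (max_sub_max_le_max _ _ _ _).trans (max_le (by rw [sub_self]; positivity) ?_)
  calc 1 - z.2 * inner ℝ u z.1 - (1 - z.2 * inner ℝ v z.1) = z.2 * inner ℝ (v - u) z.1 := by
        rw [inner_sub_left]; ring
    _ ≤ |z.2| * (‖v - u‖ * ‖z.1‖) := by
        refine (le_abs_self _).trans ?_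
        rw [abs_mul]
        gcongr
        exact abs_real_inner_le_norm _ _
    _ = |z.2| * ‖z.1‖ * ‖u - v‖ := by rw [norm_sub_rev]; ring

theorem convexOn_empiricalHingeRisk {L : ℕ} (S : Fin L → E × ℝ) :
    ConvexOn ℝ univ (empiricalHingeRisk S) :=
  (convexOn_sum convex_univ _ fun i _ ↦ convexOn_hingeLoss (S i)).smul (by positivity)

theorem empiricalHingeRisk_sub_sub_le {L : ℕ} {S S' : Fin L → E × ℝ} {j : Fin L} {R : ℝ}
    (h : ∀ i, i ≠ j → S i = S' i) (hx : ‖(S j).1‖ ≤ R) (hx' : ‖(S' j).1‖ ≤ R)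
    (hy : |(S j).2| ≤ 1) (hy' : |(S' j).2| ≤ 1) (u v : E) :
    (empiricalHingeRisk S u - empiricalHingeRisk S' u)
      - (empiricalHingeRisk S v - empiricalHingeRisk S' v) ≤ 2 * R * ‖u - v‖ / L := by
  have hdiff (T : Fin L → E × ℝ) (hT : ‖(T j).1‖ ≤ R) (hT' : |(T j).2| ≤ 1) (a b : E) :
      hingeLoss a (T j) - hingeLoss b (T j) ≤ R * ‖a - b‖ :=
    (hingeLoss_sub_le a b (T j)).trans <| by
      gcongr
      nlinarith [abs_nonneg (T j).2, norm_nonneg (T j).1]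
  have h₁ := hdiff S hx hy u v
  have h₂ := hdiff S' hx' hy' v u
  rw [norm_sub_rev] at h₂
  simp only [empiricalHingeRisk, ← mul_sub, Fintype.sum_sub_sum_eq_of_eq_of_ne h]
  calc 1 / (L : ℝ) * (hingeLoss u (S j) - hingeLoss u (S' j)
        - (hingeLoss v (S j) - hingeLoss v (S' j)))
      ≤ 1 / (L : ℝ) * (R * ‖u - v‖ + R * ‖u - v‖) := by gcongr; linarith
    _ = 2 * R * ‖u - v‖ / L := by ring

end Hinge

theorem svm_uniform_stability (d L : ℕ) (hL : 0 < L) (lam R : ℝ) (hlam : 0 < lam)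
    (S S' : Fin L → EuclideanSpace ℝ (Fin d) × ℝ)
    (hdiff : ∀ i : Fin L, i ≠ (⟨L - 1, by omega⟩ : Fin L) → S i = S' i)
    (hRS : ∀ i, ‖(S i).1‖ ≤ R) (hRS' : ∀ i, ‖(S' i).1‖ ≤ R)
    (hyS : ∀ i, (S i).2 = 1 ∨ (S i).2 = -1) (hyS' : ∀ i, (S' i).2 = 1 ∨ (S' i).2 = -1)
    (w w' : EuclideanSpace ℝ (Fin d))
    (hw : ∀ v, lam * ‖w‖ ^ 2 + (1 / (L : ℝ)) * ∑ i, max 0 (1 - (S i).2 * (inner ℝ w (S i).1 : ℝ))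
      ≤ lam * ‖v‖ ^ 2 + (1 / (L : ℝ)) * ∑ i, max 0 (1 - (S i).2 * (inner ℝ v (S i).1 : ℝ)))
    (hw' : ∀ v, lam * ‖w'‖ ^ 2 + (1 / (L : ℝ)) * ∑ i, max 0 (1 - (S' i).2 * (inner ℝ w' (S' i).1 : ℝ))
      ≤ lam * ‖v‖ ^ 2 + (1 / (L : ℝ)) * ∑ i, max 0 (1 - (S' i).2 * (inner ℝ v (S' i).1 : ℝ))) :
    ‖w - w'‖ ≤ R / (lam * L) := by
  set j : Fin L := ⟨L - 1, by omega⟩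
  have hy (y : ℝ) (h : y = 1 ∨ y = -1) : |y| ≤ 1 := by rcases h with rfl | rfl <;> norm_num
  have hF (T : Fin L → EuclideanSpace ℝ (Fin d) × ℝ) :=
    (convexOn_empiricalHingeRisk T).strongConvexOn_mul_sq_norm_add lam
  have hgrowth := (hF S).add_sq_norm_le_of_isMinOn (isMinOn_univ_iff.2 hw) trivial (mem_univ w')
  have hgrowth' := (hF S').add_sq_norm_le_of_isMinOn (isMinOn_univ_iff.2 hw') trivial (mem_univ w)
  have hrisk := empiricalHingeRisk_sub_sub_le hdiff (hRS j) (hRS' j) (hy _ (hyS j))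
    (hy _ (hyS' j)) w' w
  have hR : 0 ≤ R := (norm_nonneg _).trans (hRS j)
  have hLpos : (0 : ℝ) < L := by exact_mod_cast hL
  rw [norm_sub_rev w'] at hgrowth hrisk
  have key : lam * ‖w - w'‖ ^ 2 ≤ R * ‖w - w'‖ / L := by
    linear_combination (hgrowth + hgrowth' + hrisk) / 2
  rcases (norm_nonneg (w - w')).eq_or_lt' with hD | hD
  · rw [hD]; positivity
  · rw [le_div_iff₀ (by positivity)]
    rw [le_div_iff₀ hLpos] at key
    nlinarith
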